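/- arXiv:2002.07117 — 5 statements merged into one kernel-verified Lean document; each statement's English description precedes it below -/
import Mathlib

section
/- Let ξ be a real random variable with E[|ξ|^k] < ∞ for a fixed integer k ≥ 1, and let φ(u) = E[e^{iuξ}] be its characteristic function. Let α > 0, Δ > 0 and j ∈ ℕ, and define K₁(u) = ∫_{jΔ}^{(j+1)Δ} φ( u e^{−α((j+1)Δ − s)} ) ds for u ∈ ℝ. Then K₁ is k times differentiable at 0 and its k-th derivative at 0 is K₁^{(k)}(0) = i^k E[ξ^k] (1 − e^{−kαΔ})/(kα). -/
/-! The function `φ` is the characteristic function of the law of `ξ`, hence of class `C^k` with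
`φ⁽ⁿ⁾(0) = iⁿ E[ξⁿ]`. Writing `K₁(u) = ∫ φ(u c(s)) ds` with `c(s) = e^{-α((j+1)Δ - s)}`, the
`u`-derivatives of the integrand are continuous in `(u, s)`, hence bounded on compacts, so one may
differentiate under the integral: `K₁⁽ⁿ⁾(u) = ∫ c(s)ⁿ φ⁽ⁿ⁾(u c(s)) ds`. At `u = 0` this is
`iᵏ E[ξᵏ] ∫ c(s)ᵏ ds`, and the last integral is elementary. -/

open MeasureTheory ProbabilityTheory Set

section ParametricIntegral

variable {E : Type*} [NormedAddCommGroup E] [NormedSpace ℝ E] {c w : ℝ → ℝ} {a b : ℝ}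

theorem hasDerivAt_intervalIntegral_smul_comp_mul {g : ℝ → E} (hg : ContDiff ℝ 1 g)
    (hw : Continuous w) (hc : Continuous c) (u : ℝ) :
    HasDerivAt (fun v ↦ ∫ s in a..b, w s • g (v * c s))
      (∫ s in a..b, (w s * c s) • deriv g (u * c s)) u := by
  have hg' : Continuous (deriv g) := hg.continuous_deriv le_rfl
  have hF' : Continuous fun p : ℝ × ℝ ↦ (w p.2 * c p.2) • deriv g (p.1 * c p.2) := by fun_prop
  obtain ⟨C, hC⟩ := ((isCompact_closedBall u 1).prod
    (isCompact_uIcc (a := a) (b := b))).exists_bound_of_continuousOn hF'.continuousOn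
  refine (intervalIntegral.hasDerivAt_integral_of_dominated_loc_of_deriv_le (μ := volume)
    (F := fun v s ↦ w s • g (v * c s)) (F' := fun v s ↦ (w s * c s) • deriv g (v * c s))
    (bound := fun _ ↦ C) (Metric.ball_mem_nhds u one_pos) ?_ ?_ ?_ ?_ intervalIntegrable_const ?_).2
  · exact .of_forall fun v ↦
      (by fun_prop : Continuous fun s ↦ w s • g (v * c s)).aestronglyMeasurable
  · exact (by fun_prop : Continuous fun s ↦ w s • g (u * c s)).intervalIntegrable a b
  · exact (by fun_prop : Continuous fun s ↦ (w s * c s) • deriv g (u * c s)).aestronglyMeasurable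
  · exact .of_forall fun s hs v hv ↦
      hC (v, s) ⟨Metric.ball_subset_closedBall hv, uIoc_subset_uIcc hs⟩
  · refine .of_forall fun s _ v _ ↦ ?_
    have := ((hg.differentiable one_ne_zero (v * c s)).hasDerivAt.scomp v
      (hasDerivAt_mul_const (c s))).const_smul (w s)
    rw [← smul_smul]
    exact this

variable {f : ℝ → E} {k : ℕ}

theorem ContDiff.contDiff_one_iteratedDeriv (hf : ContDiff ℝ k f) {n : ℕ} (hn : n < k) :
    ContDiff ℝ 1 (iteratedDeriv n f) := by
  rw [iteratedDeriv_eq_iterate]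
  exact ContDiff.iterate_deriv' 1 n (hf.of_le (by norm_cast; omega))

theorem iteratedDeriv_intervalIntegral_comp_mul (hf : ContDiff ℝ k f) (hc : Continuous c)
    {n : ℕ} (hn : n ≤ k) :
    iteratedDeriv n (fun u ↦ ∫ s in a..b, f (u * c s)) =
      fun u ↦ ∫ s in a..b, c s ^ n • iteratedDeriv n f (u * c s) := by
  induction n with
  | zero => simp
  | succ n ih =>
    ext u
    rw [iteratedDeriv_succ, ih (by omega), iteratedDeriv_succ]
    simp_rw [pow_succ]
    exact (hasDerivAt_intervalIntegral_smul_comp_mul (hf.contDiff_one_iteratedDeriv (by omega))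
      (by fun_prop) hc u).deriv

theorem contDiff_intervalIntegral_comp_mul (hf : ContDiff ℝ k f) (hc : Continuous c) :
    ContDiff ℝ k (fun u ↦ ∫ s in a..b, f (u * c s)) := by
  refine contDiff_iff_iteratedDeriv.2 ⟨fun n hn ↦ ?_, fun n hn ↦ ?_⟩
  · have := hf.continuous_iteratedDeriv n (by exact_mod_cast hn)
    rw [iteratedDeriv_intervalIntegral_comp_mul hf hc (by exact_mod_cast hn)]
    exact intervalIntegral.continuous_parametric_intervalIntegral_of_continuous' (by fun_prop) a b
  · have hnk : n < k := by exact_mod_cast hn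
    rw [iteratedDeriv_intervalIntegral_comp_mul hf hc hnk.le]
    exact fun u ↦ (hasDerivAt_intervalIntegral_smul_comp_mul
      (hf.contDiff_one_iteratedDeriv hnk) (by fun_prop) hc u).differentiableAt

end ParametricIntegral

theorem integral_exp_neg_mul_sub {r : ℝ} (hr : r ≠ 0) (a b : ℝ) :
    ∫ s in a..b, Real.exp (-r * (b - s)) = (1 - Real.exp (-r * (b - a))) / r := by
  have hderiv (s : ℝ) :
      HasDerivAt (fun s ↦ Real.exp (-r * (b - s)) / r) (Real.exp (-r * (b - s))) s := by
    refine ((((hasDerivAt_id s).const_sub b).const_mul (-r)).exp.div_const r).congr_deriv ?_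
    simp [field]
  rw [intervalIntegral.integral_eq_sub_of_hasDerivAt (fun s _ ↦ hderiv s)
    ((by fun_prop : Continuous fun s ↦ Real.exp (-r * (b - s))).intervalIntegrable a b)]
  rw [sub_self, mul_zero, Real.exp_zero]
  ring

theorem K1_iteratedDeriv_at_zero_general {Ω : Type*} [MeasurableSpace Ω] (P : Measure Ω)
    [IsProbabilityMeasure P] (ξ : Ω → ℝ) (hξmeas : Measurable ξ) (k : ℕ) (hk : 1 ≤ k)
    (hmom : Integrable (fun ω => |ξ ω| ^ k) P)
    (φ : ℝ → ℂ) (hφ : ∀ u : ℝ, φ u = ∫ ω, Complex.exp (Complex.I * (u : ℂ) * (ξ ω : ℂ)) ∂P)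
    (α Δ : ℝ) (hα : 0 < α) (j : ℕ)
    (K₁ : ℝ → ℂ)
    (hK₁ : ∀ u : ℝ, K₁ u =
      ∫ s in ((j : ℝ) * Δ)..(((j : ℝ) + 1) * Δ), φ (u * Real.exp (-α * (((j : ℝ) + 1) * Δ - s)))) :
    ContDiffAt ℝ k K₁ 0 ∧
    iteratedDeriv k K₁ 0
      = Complex.I ^ k * ((∫ ω, ξ ω ^ k ∂P : ℝ) : ℂ)
          * (((1 - Real.exp (-(k : ℝ) * α * Δ)) / ((k : ℝ) * α) : ℝ) : ℂ) := by
  have hφ_eq : φ = charFun (P.map ξ) := by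
    ext u
    rw [hφ, charFun_apply_real, integral_map hξmeas.aemeasurable (by fun_prop)]
    simp_rw [mul_comm Complex.I, mul_right_comm]
  have hk0 : k ≠ 0 := by omega
  have hmem : MemLp id k (P.map ξ) := by
    rw [memLp_map_measure_iff aestronglyMeasurable_id hξmeas.aemeasurable]
    exact (integrable_norm_rpow_iff hξmeas.aestronglyMeasurable (by exact_mod_cast hk0) (by simp)).1
      (by simpa using hmom)
  have hK : K₁ = fun u ↦ ∫ s in ((j : ℝ) * Δ)..(((j : ℝ) + 1) * Δ),
      charFun (P.map ξ) (u * Real.exp (-α * (((j : ℝ) + 1) * Δ - s))) := by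
    ext u
    rw [hK₁, hφ_eq]
  have hc : Continuous fun s ↦ Real.exp (-α * (((j : ℝ) + 1) * Δ - s)) := by fun_prop
  have hkα : (k : ℝ) * α ≠ 0 := mul_ne_zero (by exact_mod_cast hk0) hα.ne'
  have hweight : ∫ s in ((j : ℝ) * Δ)..(((j : ℝ) + 1) * Δ),
      Real.exp (-α * (((j : ℝ) + 1) * Δ - s)) ^ k =
        (1 - Real.exp (-(k : ℝ) * α * Δ)) / ((k : ℝ) * α) := by
    simp_rw [← Real.exp_nat_mul, ← mul_assoc, ← neg_mul_eq_mul_neg]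
    rw [integral_exp_neg_mul_sub hkα]
    ring_nf
  rw [hK]
  refine ⟨(contDiff_intervalIntegral_comp_mul (contDiff_charFun hmem) hc).contDiffAt, ?_⟩
  rw [iteratedDeriv_intervalIntegral_comp_mul (contDiff_charFun hmem) hc le_rfl]
  simp_rw [zero_mul, iteratedDeriv_charFun_zero hmem]
  rw [intervalIntegral.integral_smul_const, hweight,
    integral_map hξmeas.aemeasurable (by fun_prop), Complex.real_smul]
  ring

/-- The `k`-th derivative at `0` of
`K₁(u) = ∫_{jΔ}^{(j+1)Δ} φ(u e^{−α((j+1)Δ−s)}) ds` is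
`i^k E[ξ^k] (1 − e^{−kαΔ})/(kα)`. -/
theorem K1_iteratedDeriv_at_zero {Ω : Type*} [MeasurableSpace Ω] (P : Measure Ω)
    [IsProbabilityMeasure P] (ξ : Ω → ℝ) (hξmeas : Measurable ξ) (k : ℕ) (hk : 1 ≤ k)
    (hmom : Integrable (fun ω => |ξ ω| ^ k) P)
    (φ : ℝ → ℂ) (hφ : ∀ u : ℝ, φ u = ∫ ω, Complex.exp (Complex.I * (u : ℂ) * (ξ ω : ℂ)) ∂P)
    (α Δ : ℝ) (hα : 0 < α) (hΔ : 0 < Δ) (j : ℕ)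
    (K₁ : ℝ → ℂ)
    (hK₁ : ∀ u : ℝ, K₁ u =
      ∫ s in ((j : ℝ) * Δ)..(((j : ℝ) + 1) * Δ), φ (u * Real.exp (-α * (((j : ℝ) + 1) * Δ - s)))) :
    ContDiffAt ℝ k K₁ 0 ∧
    iteratedDeriv k K₁ 0
      = Complex.I ^ k * ((∫ ω, ξ ω ^ k ∂P : ℝ) : ℂ)
          * (((1 - Real.exp (-(k : ℝ) * α * Δ)) / ((k : ℝ) * α) : ℝ) : ℂ) :=
  K1_iteratedDeriv_at_zero_general P ξ hξmeas k hk hmom φ hφ α Δ hα j K₁ hK₁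
end

section
/- Let ξ be a real random variable with E[|ξ|^k] < ∞ for a fixed integer k ≥ 1, and let φ(u) = E[e^{iuξ}] be its characteristic function. Let α > 0, Δ > 0 and j ∈ ℕ, and define K₂(u) = ∫_0^{jΔ} φ( u (e^{−αΔ} − 1) e^{−α(jΔ − s)} ) ds for u ∈ ℝ. Then K₂ is k times differentiable at 0 and its k-th derivative at 0 is K₂^{(k)}(0) = (−1)^k i^k E[ξ^k] (1 − e^{−αΔ})^k (1 − e^{−kαjΔ})/(kα). -/
/-!
Writing `c s = (e^{-αΔ} - 1) e^{-α(jΔ - s)}`, the function `K₂` is the characteristic function of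
the image of `Leb|(0, jΔ] ⊗ P` under `(s, ω) ↦ c s * ξ ω`: by Fubini,
`∫ exp (i u c(s) ξ(ω)) = ∫ φ (u c(s)) ds`. This finite measure inherits a `k`-th moment from `ξ`,
so its characteristic function is `C^k` with `k`-th derivative at `0` equal to `i^k` times its
`k`-th moment, which factors as `(∫₀^{jΔ} c^k) E[ξ^k]`; the first factor is an elementary
exponential integral.
-/
open MeasureTheory Complex

noncomputable def mulLaw {S Ω : Type*} [MeasurableSpace S] [MeasurableSpace Ω]
    (μ : Measure S) (P : Measure Ω) (c : S → ℝ) (ξ : Ω → ℝ) : Measure ℝ :=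
  (μ.prod P).map fun p => c p.1 * ξ p.2

section MulLaw

variable {S Ω : Type*} [MeasurableSpace S] [MeasurableSpace Ω] {μ : Measure S} {P : Measure Ω}
  {c : S → ℝ} {ξ : Ω → ℝ}

instance [IsFiniteMeasure μ] [IsFiniteMeasure P] : IsFiniteMeasure (mulLaw μ P c ξ) := by
  unfold mulLaw; infer_instance

lemma charFun_mulLaw [IsFiniteMeasure μ] [IsFiniteMeasure P] (hc : Measurable c)
    (hξ : Measurable ξ) (u : ℝ) :
    charFun (mulLaw μ P c ξ) u = ∫ s, charFun (P.map ξ) (u * c s) ∂μ := by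
  have hexp : Integrable (fun p : S × Ω => exp (u * ((c p.1 * ξ p.2 : ℝ) : ℂ) * I)) (μ.prod P) :=
    .of_bound (by fun_prop) 1 (ae_of_all _ fun p => by norm_cast; rw [norm_exp_ofReal_mul_I])
  simp only [charFun_apply_real, mulLaw]
  rw [integral_map (by fun_prop) (by fun_prop), integral_prod _ hexp]
  congr 1 with s
  rw [integral_map hξ.aemeasurable (by fun_prop)]
  simp only [ofReal_mul, mul_assoc]

lemma memLp_mulLaw [SFinite P] (hc : Measurable c) (hξ : Measurable ξ) {n : ℕ}
    (hcn : Integrable (fun s => |c s| ^ n) μ) (hξn : Integrable (fun ω => |ξ ω| ^ n) P) :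
    MemLp id n (mulLaw μ P c ξ) := by
  rcases eq_or_ne n 0 with rfl | hn
  · simpa using aestronglyMeasurable_id
  rw [← integrable_norm_rpow_iff aestronglyMeasurable_id (by simpa) (by simp)]
  simp only [ENNReal.toReal_natCast, Real.rpow_natCast, id, Real.norm_eq_abs]
  rw [mulLaw, integrable_map_measure (by fun_prop) (by fun_prop)]
  simpa [Function.comp_def, abs_mul, mul_pow] using hcn.mul_prod hξn

lemma integral_pow_mulLaw [SFinite μ] [SFinite P] (hc : Measurable c) (hξ : Measurable ξ)
    (n : ℕ) : ∫ x, x ^ n ∂(mulLaw μ P c ξ) = (∫ s, c s ^ n ∂μ) * ∫ ω, ξ ω ^ n ∂P := by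
  rw [mulLaw, integral_map (by fun_prop) (by fun_prop)]
  simp only [mul_pow]
  exact integral_prod_mul (fun s => c s ^ n) (fun ω => ξ ω ^ n)

end MulLaw

lemma integral_exp_mul_sub {a : ℝ} (ha : a ≠ 0) (T : ℝ) :
    ∫ s in (0 : ℝ)..T, Real.exp (a * (s - T)) = (1 - Real.exp (-(a * T))) / a := by
  simp only [mul_sub, Real.exp_sub, intervalIntegral.integral_div,
    intervalIntegral.integral_comp_mul_left Real.exp ha, integral_exp]
  rw [mul_zero, Real.exp_zero, smul_eq_mul, Real.exp_neg]
  field_simp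

/-- The `k`-th derivative at `0` of
`K₂(u) = ∫_0^{jΔ} φ(u (e^{−αΔ}−1) e^{−α(jΔ−s)}) ds` is
`(−1)^k i^k E[ξ^k] (1 − e^{−αΔ})^k (1 − e^{−kαjΔ})/(kα)`. -/
theorem K2_iteratedDeriv_at_zero {Ω : Type*} [MeasurableSpace Ω] (P : Measure Ω)
    [IsProbabilityMeasure P] (ξ : Ω → ℝ) (hξmeas : Measurable ξ) (k : ℕ) (hk : 1 ≤ k)
    (hmom : Integrable (fun ω => |ξ ω| ^ k) P)
    (φ : ℝ → ℂ) (hφ : ∀ u : ℝ, φ u = ∫ ω, Complex.exp (Complex.I * (u : ℂ) * (ξ ω : ℂ)) ∂P)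
    (α Δ : ℝ) (hα : 0 < α) (hΔ : 0 < Δ) (j : ℕ)
    (K₂ : ℝ → ℂ)
    (hK₂ : ∀ u : ℝ, K₂ u =
      ∫ s in (0:ℝ)..((j : ℝ) * Δ),
        φ (u * (Real.exp (-α * Δ) - 1) * Real.exp (-α * ((j : ℝ) * Δ - s)))) :
    ContDiffAt ℝ k K₂ 0 ∧
    iteratedDeriv k K₂ 0
      = (-1 : ℂ) ^ k * Complex.I ^ k * ((∫ ω, ξ ω ^ k ∂P : ℝ) : ℂ)
          * (((1 - Real.exp (-α * Δ)) ^ k * (1 - Real.exp (-(k : ℝ) * α * (j : ℝ) * Δ))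
              / ((k : ℝ) * α) : ℝ) : ℂ) := by
  set T : ℝ := j * Δ
  set c : ℝ → ℝ := fun s => (Real.exp (-α * Δ) - 1) * Real.exp (-α * (T - s))
  have hc : Continuous c := by fun_prop
  have hT : 0 ≤ T := by positivity
  have hφ_charFun : φ = charFun (P.map ξ) := funext fun u => by
    rw [hφ, charFun_apply_real, integral_map hξmeas.aemeasurable (by fun_prop)]
    simp only [mul_comm, mul_left_comm]
  have hK : K₂ = charFun (mulLaw (volume.restrict (Set.Ioc 0 T)) P c ξ) := funext fun u => by
    rw [hK₂, charFun_mulLaw hc.measurable hξmeas, intervalIntegral.integral_of_le hT, hφ_charFun]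
    simp only [c, mul_assoc]
  have hmem : MemLp id k (mulLaw (volume.restrict (Set.Ioc 0 T)) P c ξ) :=
    memLp_mulLaw hc.measurable hξmeas (hc.abs.pow k).integrableOn_Ioc hmom
  refine ⟨hK ▸ (contDiff_charFun hmem).contDiffAt, ?_⟩
  have hkα : (k : ℝ) * α ≠ 0 := by positivity
  have hc_pow (s : ℝ) : c s ^ k = (Real.exp (-α * Δ) - 1) ^ k * Real.exp (k * α * (s - T)) := by
    rw [mul_pow, ← Real.exp_nat_mul]; ring_nf
  have hsign : (Real.exp (-α * Δ) - 1) ^ k = (-1) ^ k * (1 - Real.exp (-α * Δ)) ^ k := by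
    rw [← mul_pow, neg_one_mul, neg_sub]
  rw [hK, iteratedDeriv_charFun_zero hmem, integral_pow_mulLaw hc.measurable hξmeas,
    ← intervalIntegral.integral_of_le hT]
  simp only [hc_pow, intervalIntegral.integral_const_mul, integral_exp_mul_sub hkα, hsign]
  rw [show -(k * α * T) = -k * α * j * Δ by ring]
  push_cast
  ring
end

section
/- Let α > 0, Δ > 0, j ∈ ℕ, λ ≥ 0 and μ, σ ∈ ℝ. Let ξ be a real random variable with E[|ξ|³] < ∞ and characteristic function φ, and set K₁(u) = ∫_{jΔ}^{(j+1)Δ} φ( u e^{−α((j+1)Δ − s)} ) ds, K₂(u) = ∫_0^{jΔ} φ( u (e^{−αΔ} − 1) e^{−α(jΔ − s)} ) ds, E_{j,k}(α) = (1 − e^{−kαΔ}) + (−1)^k (1 − e^{−αΔ})^k (1 − e^{−kαjΔ}), and T₁(u) = −λ(j+1)Δ + i μ e^{−αjΔ}(1 − e^{−αΔ}) u − (σ²/(4α)) E_{j,2}(α) u² + λ ( K₁(u) + K₂(u) ). If X is a real random variable with E[|X|³] < ∞ whose characteristic function is exp(T₁(u)), then, writing m = μ e^{−αjΔ}(1 −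 e^{−αΔ}) + (λ/α) E[ξ] E_{j,1}(α) and v = (λ E[ξ²] + σ²) E_{j,2}(α)/(2α), one has E[X³] = λ E[ξ³] E_{j,3}(α)/(3α) + 3 m v + m³. -/
/-!
The characteristic function of `X` is `exp ∘ T₁`, so `E[X³]` is read off from the third derivative
of `exp ∘ T₁` at `0`: `T₁(0) = 0`, `T₁'(0) = i m`, `T₁''(0) = -v` and `T₁'''(0) = -i κ₃` with
`κ₃ = λ E[ξ³] E_{j,3}(α) / (3α)`, whence `-i E[X³] = (i m)³ + 3 (i m) (-v) - i κ₃`.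
The derivatives of the jump part come from differentiating under the integral sign,
`∂ᵤᵏ ∫ φ(u g(s)) ds = ∫ g(s)ᵏ φ⁽ᵏ⁾(u g(s)) ds`; at `u = 0` this is `iᵏ E[ξᵏ] ∫ g(s)ᵏ ds`, and the
integrals of the powers of the two kernels add up to `E_{j,k}(α) / (kα)`.
-/

open MeasureTheory Complex

lemma hasDerivAt_intervalIntegral_mul_comp_mul {c f f' : ℝ → ℂ} {g : ℝ → ℝ}
    (hc : Continuous c) (hg : Continuous g) (hf : ∀ x, HasDerivAt f (f' x) x)
    (hf' : Continuous f') (a b u : ℝ) :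
    HasDerivAt (fun u => ∫ s in a..b, c s * f (u * g s))
      (∫ s in a..b, c s * g s * f' (u * g s)) u := by
  have hfc : Continuous f := continuous_iff_continuousAt.2 fun x => (hf x).continuousAt
  obtain ⟨C, hC⟩ := ((isCompact_closedBall u 1).prod (isCompact_uIcc (a := a) (b := b)))
    |>.exists_bound_of_continuousOn
      (f := fun p : ℝ × ℝ => c p.2 * g p.2 * f' (p.1 * g p.2)) (by fun_prop)
  refine (intervalIntegral.hasDerivAt_integral_of_dominated_loc_of_deriv_le
    (F := fun x s => c s * f (x * g s)) (F' := fun x s => c s * g s * f' (x * g s))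
    (bound := fun _ => C) (Metric.ball_mem_nhds u one_pos)
    (.of_forall fun x => (by fun_prop : Continuous fun s => c s * f (x * g s)).aestronglyMeasurable)
    ((by fun_prop : Continuous fun s => c s * f (u * g s)).intervalIntegrable a b)
    ((by fun_prop : Continuous fun s => c s * g s * f' (u * g s)).aestronglyMeasurable)
    (ae_of_all _ fun s hs x hx =>
      hC (x, s) ⟨Metric.ball_subset_closedBall hx, Set.uIoc_subset_uIcc hs⟩)
    intervalIntegrable_const
    (ae_of_all _ fun s _ x _ => ?_)).2
  have := ((hf (x * g s)).scomp x (hasDerivAt_mul_const (g s))).const_mul (c s)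
  rwa [Complex.real_smul, ← mul_assoc] at this

/-- The `k`-th derivative of `u ↦ ∫ s in a..b, f (u * g s)`. -/
noncomputable def integralScaledDeriv (f : ℝ → ℂ) (g : ℝ → ℝ) (a b : ℝ) (k : ℕ) (u : ℝ) : ℂ :=
  ∫ s in a..b, (g s : ℂ) ^ k * iteratedDeriv k f (u * g s)

lemma integralScaledDeriv_zero (f : ℝ → ℂ) (g : ℝ → ℝ) (a b u : ℝ) :
    integralScaledDeriv f g a b 0 u = ∫ s in a..b, f (u * g s) := by
  simp [integralScaledDeriv]

lemma integralScaledDeriv_apply_zero (f : ℝ → ℂ) (g : ℝ → ℝ) (a b : ℝ) (k : ℕ) :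
    integralScaledDeriv f g a b k 0 = (∫ s in a..b, g s ^ k : ℝ) * iteratedDeriv k f 0 := by
  simp only [integralScaledDeriv, zero_mul, intervalIntegral.integral_mul_const, ← ofReal_pow,
    intervalIntegral.integral_ofReal]

lemma hasDerivAt_integralScaledDeriv {f : ℝ → ℂ} {n : ℕ} (hf : ContDiff ℝ n f) {g : ℝ → ℝ}
    (hg : Continuous g) (a b : ℝ) {k : ℕ} (hk : k < n) (u : ℝ) :
    HasDerivAt (integralScaledDeriv f g a b k) (integralScaledDeriv f g a b (k + 1) u) u := by
  have hderiv (x : ℝ) : HasDerivAt (iteratedDeriv k f) (iteratedDeriv (k + 1) f x) x := by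
    rw [iteratedDeriv_succ]
    exact ((hf.differentiable_iteratedDeriv k (by exact_mod_cast hk)) x).hasDerivAt
  unfold integralScaledDeriv
  simpa only [← pow_succ] using
    hasDerivAt_intervalIntegral_mul_comp_mul (c := fun s => (g s : ℂ) ^ k) (by fun_prop) hg hderiv
      (hf.continuous_iteratedDeriv (k + 1) (by exact_mod_cast hk)) a b u

lemma iteratedDeriv_three_cexp_comp {F F₁ F₂ F₃ : ℝ → ℂ} (h₀ : ∀ u, HasDerivAt F (F₁ u) u)
    (h₁ : ∀ u, HasDerivAt F₁ (F₂ u) u) (h₂ : ∀ u, HasDerivAt F₂ (F₃ u) u) (u : ℝ) :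
    iteratedDeriv 3 (fun u => exp (F u)) u
      = exp (F u) * (F₁ u ^ 3 + 3 * F₁ u * F₂ u + F₃ u) := by
  have d₁ (u : ℝ) : HasDerivAt (fun u => exp (F u)) (exp (F u) * F₁ u) u := (h₀ u).cexp
  have d₂ (u : ℝ) :
      HasDerivAt (fun u => exp (F u) * F₁ u) (exp (F u) * (F₁ u ^ 2 + F₂ u)) u :=
    ((d₁ u).mul (h₁ u)).congr_deriv (by ring)
  have d₃ : HasDerivAt (fun u => exp (F u) * (F₁ u ^ 2 + F₂ u))
      (exp (F u) * (F₁ u ^ 3 + 3 * F₁ u * F₂ u + F₃ u)) u :=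
    ((d₁ u).mul (((h₁ u).pow 2).add (h₂ u))).congr_deriv
      (by simp only [Pi.add_apply, Pi.pow_apply]; push_cast; ring)
  rw [iteratedDeriv_succ, iteratedDeriv_succ, iteratedDeriv_one, funext fun u => (d₁ u).deriv,
    funext fun u => (d₂ u).deriv, d₃.deriv]

section Moments

variable {Ω : Type*} [MeasurableSpace Ω] {P : Measure Ω} {Y : Ω → ℝ}

lemma memLp_id_map_of_integrable_abs_pow (hY : Measurable Y) {n : ℕ} (hn : n ≠ 0)
    (h : Integrable (fun ω => |Y ω| ^ n) P) : MemLp id n (P.map Y) := by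
  rw [memLp_map_measure_iff aestronglyMeasurable_id hY.aemeasurable, Function.id_comp,
    ← integrable_norm_rpow_iff hY.aestronglyMeasurable (by simpa using hn) (by simp)]
  simpa using h

lemma charFun_map_apply (hY : Measurable Y) (u : ℝ) :
    charFun (P.map Y) u = ∫ ω, exp (I * u * Y ω) ∂P := by
  rw [charFun_apply_real, integral_map hY.aemeasurable (by fun_prop)]
  congr 1 with ω
  ring_nf

lemma iteratedDeriv_charFun_map_zero [IsFiniteMeasure P] (hY : Measurable Y) {n k : ℕ}
    (hn : MemLp id n (P.map Y)) (hk : k ≤ n) :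
    iteratedDeriv k (charFun (P.map Y)) 0 = I ^ k * ∫ ω, Y ω ^ k ∂P := by
  rw [iteratedDeriv_charFun_zero (hn.mono_exponent (by exact_mod_cast hk)),
    integral_map hY.aemeasurable (by fun_prop)]

/-- `κ₁, κ₂, κ₃` are the first three cumulants of `Y`. -/
theorem integral_pow_three_eq_of_charFun_eq_cexp [IsProbabilityMeasure P] (hY : Measurable Y)
    (hY3 : Integrable (fun ω => |Y ω| ^ 3) P) (J : ℕ → ℝ → ℂ)
    (hJ : ∀ k < 3, ∀ u, HasDerivAt (J k) (J (k + 1) u) u) (c₀ c₁ c₂ : ℂ)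
    (hchar : ∀ u : ℝ, ∫ ω, exp (I * u * Y ω) ∂P = exp (c₀ + c₁ * u + c₂ * u ^ 2 + J 0 u))
    (h₀ : c₀ + J 0 0 = 0) {κ₁ κ₂ κ₃ : ℝ} (h₁ : c₁ + J 1 0 = I * κ₁)
    (h₂ : 2 * c₂ + J 2 0 = -κ₂) (h₃ : J 3 0 = -(I * κ₃)) :
    ∫ ω, Y ω ^ 3 ∂P = κ₃ + 3 * κ₁ * κ₂ + κ₁ ^ 3 := by
  have hψ : charFun (P.map Y) = fun u => exp (c₀ + c₁ * u + c₂ * u ^ 2 + J 0 u) :=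
    funext fun u => by rw [charFun_map_apply hY, hchar]
  have hofReal (u : ℝ) : HasDerivAt (fun u : ℝ => (u : ℂ)) 1 u := (hasDerivAt_id u).ofReal_comp
  have key := iteratedDeriv_three_cexp_comp
    (F := fun u => c₀ + c₁ * u + c₂ * u ^ 2 + J 0 u) (F₁ := fun u => c₁ + 2 * c₂ * u + J 1 u)
    (F₂ := fun u => 2 * c₂ + J 2 u)
    (fun u => ((((hofReal u).const_mul c₁).const_add c₀).add
      (((hofReal u).pow 2).const_mul c₂) |>.add (hJ 0 (by norm_num) u)).congr_deriv (by ring))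
    (fun u => ((((hofReal u).const_mul (2 * c₂)).const_add c₁).add
      (hJ 1 (by norm_num) u)).congr_deriv (by ring))
    (fun u => ((hJ 2 (by norm_num) u).const_add (2 * c₂)).congr_deriv (by ring)) 0
  rw [← hψ, iteratedDeriv_charFun_map_zero hY (memLp_id_map_of_integrable_abs_pow hY
    (by norm_num) hY3) le_rfl] at key
  simp only [ofReal_zero, mul_zero, zero_pow two_ne_zero, add_zero, h₀, exp_zero, one_mul,
    Nat.reduceAdd, h₁, h₂, h₃] at key
  have : ((∫ ω, Y ω ^ 3 ∂P : ℝ) : ℂ) = ((κ₃ + 3 * κ₁ * κ₂ + κ₁ ^ 3 : ℝ) : ℂ) := by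
    push_cast
    linear_combination I * key
      + ((∫ ω, Y ω ^ 3 ∂P : ℝ) * (1 - I ^ 2) + (I ^ 2 - 1) * κ₁ ^ 3 - 3 * κ₁ * κ₂ - κ₃) * I_sq
  exact_mod_cast this

end Moments

lemma integral_exp_neg_mul_sub_pow {c : ℝ} (hc : c ≠ 0) (a b : ℝ) {k : ℕ} (hk : k ≠ 0) :
    ∫ s in a..b, Real.exp (-c * (b - s)) ^ k = (1 - Real.exp (-k * c * (b - a))) / (k * c) := by
  have hkc : (k : ℝ) * c ≠ 0 := mul_ne_zero (Nat.cast_ne_zero.2 hk) hc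
  simp_rw [← Real.exp_nat_mul]
  rw [intervalIntegral.integral_comp_sub_left (fun x => Real.exp (k * (-c * x))), sub_self]
  have := intervalIntegral.integral_comp_mul_left (a := 0) (b := b - a) Real.exp
    (c := -k * c) (by simpa using hkc)
  simp only [mul_zero, integral_exp, Real.exp_zero, smul_eq_mul] at this
  rw [show (fun x => Real.exp (k * (-c * x))) = fun x => Real.exp (-k * c * x) by
    funext x; ring_nf, this]
  field_simp
  ring

lemma integral_kernel_pow_add_integral_kernel_pow {α : ℝ} (hα : α ≠ 0) (Δ : ℝ) (j : ℕ) {k : ℕ}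
    (hk : k ≠ 0) :
    (∫ s in (j * Δ)..((j + 1) * Δ), Real.exp (-α * ((j + 1) * Δ - s)) ^ k)
      + ∫ s in (0 : ℝ)..(j * Δ), ((Real.exp (-α * Δ) - 1) * Real.exp (-α * (j * Δ - s))) ^ k
      = ((1 - Real.exp (-k * α * Δ))
        + (-1) ^ k * (1 - Real.exp (-α * Δ)) ^ k * (1 - Real.exp (-k * α * j * Δ))) / (k * α) := by
  simp_rw [mul_pow]
  rw [intervalIntegral.integral_const_mul, integral_exp_neg_mul_sub_pow hα _ _ hk,
    integral_exp_neg_mul_sub_pow hα _ _ hk, sub_zero, show ((j : ℝ) + 1) * Δ - j * Δ = Δ by ring,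
    show Real.exp (-α * Δ) - 1 = -1 * (1 - Real.exp (-α * Δ)) by ring, mul_pow,
    ← mul_assoc _ (j : ℝ)]
  ring

/-- The `k`-th derivative of `K₁ + K₂`. -/
noncomputable def jumpExponentDeriv (φ : ℝ → ℂ) (α Δ : ℝ) (j k : ℕ) (u : ℝ) : ℂ :=
  integralScaledDeriv φ (fun s => Real.exp (-α * ((j + 1) * Δ - s))) (j * Δ) ((j + 1) * Δ) k u
    + integralScaledDeriv φ (fun s => (Real.exp (-α * Δ) - 1) * Real.exp (-α * (j * Δ - s)))
      0 (j * Δ) k u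

lemma jumpExponentDeriv_zero (φ : ℝ → ℂ) (α Δ : ℝ) (j : ℕ) (u : ℝ) :
    jumpExponentDeriv φ α Δ j 0 u
      = (∫ s in (j * Δ)..((j + 1) * Δ), φ (u * Real.exp (-α * ((j + 1) * Δ - s))))
        + ∫ s in (0 : ℝ)..(j * Δ),
            φ (u * (Real.exp (-α * Δ) - 1) * Real.exp (-α * (j * Δ - s))) := by
  simp only [jumpExponentDeriv, integralScaledDeriv_zero, mul_assoc]

lemma jumpExponentDeriv_zero_apply_zero (φ : ℝ → ℂ) (α Δ : ℝ) (j : ℕ) :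
    jumpExponentDeriv φ α Δ j 0 0 = ((j + 1) * Δ : ℝ) * φ 0 := by
  simp only [jumpExponentDeriv, integralScaledDeriv_apply_zero, pow_zero, iteratedDeriv_zero,
    intervalIntegral.integral_const, smul_eq_mul, mul_one, ← add_mul]
  push_cast
  ring

lemma jumpExponentDeriv_apply_zero (φ : ℝ → ℂ) {α : ℝ} (hα : α ≠ 0) (Δ : ℝ) (j : ℕ) {k : ℕ}
    (hk : k ≠ 0) :
    jumpExponentDeriv φ α Δ j k 0
      = (((1 - Real.exp (-k * α * Δ)) + (-1) ^ k * (1 - Real.exp (-α * Δ)) ^ k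
          * (1 - Real.exp (-k * α * j * Δ))) / (k * α) : ℝ) * iteratedDeriv k φ 0 := by
  rw [jumpExponentDeriv, integralScaledDeriv_apply_zero, integralScaledDeriv_apply_zero, ← add_mul,
    ← ofReal_add, integral_kernel_pow_add_integral_kernel_pow hα Δ j hk]

lemma hasDerivAt_jumpExponentDeriv {φ : ℝ → ℂ} {n : ℕ} (hφ : ContDiff ℝ n φ) (α Δ : ℝ) (j : ℕ)
    {k : ℕ} (hk : k < n) (u : ℝ) :
    HasDerivAt (jumpExponentDeriv φ α Δ j k) (jumpExponentDeriv φ α Δ j (k + 1) u) u :=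
  (hasDerivAt_integralScaledDeriv hφ (by fun_prop) _ _ hk u).add
    (hasDerivAt_integralScaledDeriv hφ (by fun_prop) _ _ hk u)

theorem logReturn_third_moment_general {Ω Ωx : Type*} [MeasurableSpace Ω] [MeasurableSpace Ωx]
    (P : Measure Ω) (Px : Measure Ωx)
    [IsProbabilityMeasure P] [IsProbabilityMeasure Px]
    (α Δ lam μ σ : ℝ) (j : ℕ) (hα : 0 < α)
    (ξ : Ω → ℝ) (hξmeas : Measurable ξ)
    (φ : ℝ → ℂ)
    (hφ : ∀ u : ℝ, φ u = ∫ ω, Complex.exp (Complex.I * (u : ℂ) * (ξ ω : ℂ)) ∂P)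
    (K₁ K₂ : ℝ → ℂ)
    (hK₁ : ∀ u : ℝ, K₁ u =
      ∫ s in ((j : ℝ) * Δ)..(((j : ℝ) + 1) * Δ), φ (u * Real.exp (-α * (((j : ℝ) + 1) * Δ - s))))
    (hK₂ : ∀ u : ℝ, K₂ u =
      ∫ s in (0:ℝ)..((j : ℝ) * Δ),
        φ (u * (Real.exp (-α * Δ) - 1) * Real.exp (-α * ((j : ℝ) * Δ - s))))
    (E : ℕ → ℝ)
    (hE : ∀ k : ℕ, E k = (1 - Real.exp (-(k : ℝ) * α * Δ))
        + (-1 : ℝ) ^ k * (1 - Real.exp (-α * Δ)) ^ k * (1 - Real.exp (-(k : ℝ) * α * (j : ℝ) * Δ)))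
    (T₁ : ℝ → ℂ)
    (hT₁ : ∀ u : ℝ, T₁ u = -((lam * ((j : ℝ) + 1) * Δ : ℝ) : ℂ)
        + Complex.I * ((μ * Real.exp (-α * (j : ℝ) * Δ) * (1 - Real.exp (-α * Δ)) : ℝ) : ℂ) * (u : ℂ)
        - ((σ ^ 2 / (4 * α) * E 2 : ℝ) : ℂ) * (u : ℂ) ^ 2
        + ((lam : ℝ) : ℂ) * (K₁ u + K₂ u))
    (X : Ωx → ℝ) (hXmeas : Measurable X)
    (hchar : ∀ u : ℝ, ∫ ω, Complex.exp (Complex.I * (u : ℂ) * (X ω : ℂ)) ∂Px = Complex.exp (T₁ u))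
    (hξint : Integrable (fun ω => |ξ ω| ^ 3) P)
    (hXint : Integrable (fun ω => |X ω| ^ 3) Px)
    (m v : ℝ)
    (hm : m = μ * Real.exp (-α * (j : ℝ) * Δ) * (1 - Real.exp (-α * Δ))
        + lam / α * (∫ ω, ξ ω ∂P) * E 1)
    (hv : v = (lam * (∫ ω, ξ ω ^ 2 ∂P) + σ ^ 2) * E 2 / (2 * α)) :
    ∫ ω, X ω ^ 3 ∂Px
      = lam * (∫ ω, ξ ω ^ 3 ∂P) * E 3 / (3 * α) + 3 * m * v + m ^ 3 := by
  have hφ_eq : φ = charFun (P.map ξ) := funext fun u => by rw [hφ, charFun_map_apply hξmeas]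
  have hξ3 := memLp_id_map_of_integrable_abs_pow hξmeas three_ne_zero hξint
  have hmoment (k : ℕ) (hk : k ≤ 3) : iteratedDeriv k φ 0 = I ^ k * ∫ ω, ξ ω ^ k ∂P :=
    hφ_eq ▸ iteratedDeriv_charFun_map_zero hξmeas hξ3 hk
  set J : ℕ → ℝ → ℂ := fun k u => lam * jumpExponentDeriv φ α Δ j k u
  have hJ_apply_zero (k : ℕ) (hk₀ : k ≠ 0) (hk : k ≤ 3) :
      J k 0 = lam * ((E k / (k * α) : ℝ) : ℂ) * (I ^ k * ∫ ω, ξ ω ^ k ∂P) := by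
    rw [show J k 0 = lam * jumpExponentDeriv φ α Δ j k 0 from rfl,
      jumpExponentDeriv_apply_zero φ hα.ne' Δ j hk₀, ← hE, hmoment k hk, mul_assoc]
  refine integral_pow_three_eq_of_charFun_eq_cexp hXmeas hXint J (fun k hk u =>
      (hasDerivAt_jumpExponentDeriv (hφ_eq ▸ contDiff_charFun hξ3) α Δ j hk u).const_mul _)
    (-(lam * ((j : ℝ) + 1) * Δ : ℝ))
    (I * (μ * Real.exp (-α * j * Δ) * (1 - Real.exp (-α * Δ)) : ℝ)) (-(σ ^ 2 / (4 * α) * E 2 : ℝ))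
    (fun u => ?_) ?_ ?_ ?_ ?_
  · rw [hchar, hT₁]
    congr 1
    simp only [J, jumpExponentDeriv_zero, ← hK₁, ← hK₂]
    push_cast
    ring
  · simp only [J, jumpExponentDeriv_zero_apply_zero, hφ, ofReal_zero, mul_zero, zero_mul,
      exp_zero, integral_const, probReal_univ, one_smul, mul_one]
    push_cast
    ring
  · rw [hJ_apply_zero 1 one_ne_zero (by norm_num), hm]
    push_cast [pow_one]
    ring
  · rw [hJ_apply_zero 2 two_ne_zero (by norm_num), hv]
    push_cast
    linear_combination (lam * E 2 / (2 * α) * ∫ ω, ξ ω ^ 2 ∂P : ℂ) * I_sq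
  · rw [hJ_apply_zero 3 three_ne_zero le_rfl]
    push_cast
    linear_combination (lam * E 3 / (3 * α) * (∫ ω, ξ ω ^ 3 ∂P) * I : ℂ) * I_sq

/-- Third moment of the log-return of the mean-reverting jump-diffusion model. -/
theorem logReturn_third_moment {Ω Ωx : Type*} [MeasurableSpace Ω] [MeasurableSpace Ωx]
    (P : Measure Ω) (Px : Measure Ωx)
    [IsProbabilityMeasure P] [IsProbabilityMeasure Px]
    (α Δ lam μ σ : ℝ) (j : ℕ) (hα : 0 < α) (hΔ : 0 < Δ) (hlam : 0 ≤ lam)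
    (ξ : Ω → ℝ) (hξmeas : Measurable ξ)
    (φ : ℝ → ℂ)
    (hφ : ∀ u : ℝ, φ u = ∫ ω, Complex.exp (Complex.I * (u : ℂ) * (ξ ω : ℂ)) ∂P)
    (K₁ K₂ : ℝ → ℂ)
    (hK₁ : ∀ u : ℝ, K₁ u =
      ∫ s in ((j : ℝ) * Δ)..(((j : ℝ) + 1) * Δ), φ (u * Real.exp (-α * (((j : ℝ) + 1) * Δ - s))))
    (hK₂ : ∀ u : ℝ, K₂ u =
      ∫ s in (0:ℝ)..((j : ℝ) * Δ),
        φ (u * (Real.exp (-α * Δ) - 1) * Real.exp (-α * ((j : ℝ) * Δ - s))))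
    (E : ℕ → ℝ)
    (hE : ∀ k : ℕ, E k = (1 - Real.exp (-(k : ℝ) * α * Δ))
        + (-1 : ℝ) ^ k * (1 - Real.exp (-α * Δ)) ^ k * (1 - Real.exp (-(k : ℝ) * α * (j : ℝ) * Δ)))
    (T₁ : ℝ → ℂ)
    (hT₁ : ∀ u : ℝ, T₁ u = -((lam * ((j : ℝ) + 1) * Δ : ℝ) : ℂ)
        + Complex.I * ((μ * Real.exp (-α * (j : ℝ) * Δ) * (1 - Real.exp (-α * Δ)) : ℝ) : ℂ) * (u : ℂ)
        - ((σ ^ 2 / (4 * α) * E 2 : ℝ) : ℂ) * (u : ℂ) ^ 2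
        + ((lam : ℝ) : ℂ) * (K₁ u + K₂ u))
    (X : Ωx → ℝ) (hXmeas : Measurable X)
    (hchar : ∀ u : ℝ, ∫ ω, Complex.exp (Complex.I * (u : ℂ) * (X ω : ℂ)) ∂Px = Complex.exp (T₁ u))
    (hξint : Integrable (fun ω => |ξ ω| ^ 3) P)
    (hXint : Integrable (fun ω => |X ω| ^ 3) Px)
    (m v : ℝ)
    (hm : m = μ * Real.exp (-α * (j : ℝ) * Δ) * (1 - Real.exp (-α * Δ))
        + lam / α * (∫ ω, ξ ω ∂P) * E 1)
    (hv : v = (lam * (∫ ω, ξ ω ^ 2 ∂P) + σ ^ 2) * E 2 / (2 * α)) :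
    ∫ ω, X ω ^ 3 ∂Px
      = lam * (∫ ω, ξ ω ^ 3 ∂P) * E 3 / (3 * α) + 3 * m * v + m ^ 3 :=
  logReturn_third_moment_general P Px α Δ lam μ σ j hα ξ hξmeas φ hφ K₁ K₂ hK₁ hK₂ E hE T₁ hT₁ X
    hXmeas hchar hξint hXint m v hm hv
end

section
/- Let R > 1, K > 0 and S₀ > 0, and set k = log K and x₀ = log S₀. Then the function y ↦ e^{−Ry} max(S₀ e^y − K, 0) is integrable on ℝ, and for every real x its Fourier transform satisfies ∫_ℝ e^{ixy} e^{−Ry} max(S₀ e^y − K, 0) dy = K e^{(ix−R)(k−x₀)} ( 1/(ix−R) − 1/(ix−R+1) ). -/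
/-!
Right of the log-moneyness `a = log K - log S₀` the payoff is `S₀ eʸ - K`, left of it zero, so
the transform is `∫_a^∞ (S₀ e^{(c+1)y} - K e^{cy}) dy` with `c = ix - R`. Both half-line
integrals converge because `Re c = -R < -1`, they equal `-e^{(c+1)a}/(c+1)` and `-e^{ca}/c`, and
`S₀ eᵃ = K` puts them in the stated form.
-/

open MeasureTheory Set

section CallPayoff

variable {K S₀ : ℝ}

lemma lt_log_sub_log_iff (hK : 0 < K) (hS₀ : 0 < S₀) (y : ℝ) :
    Real.log K - Real.log S₀ < y ↔ K < S₀ * Real.exp y := by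
  rw [← Real.log_div hK.ne' hS₀.ne', Real.log_lt_iff_lt_exp (div_pos hK hS₀),
    div_lt_iff₀' hS₀]

lemma call_payoff_eq_indicator (hK : 0 < K) (hS₀ : 0 < S₀) (y : ℝ) :
    max (S₀ * Real.exp y - K) 0
      = (Ioi (Real.log K - Real.log S₀)).indicator (fun y => S₀ * Real.exp y - K) y := by
  by_cases hy : y ∈ Ioi (Real.log K - Real.log S₀)
  · have := (lt_log_sub_log_iff hK hS₀ y).1 hy
    rw [indicator_of_mem hy, max_eq_left (by linarith)]
  · have := (lt_log_sub_log_iff hK hS₀ y).not.1 hy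
    rw [indicator_of_notMem hy, max_eq_right (by linarith)]

lemma cexp_mul_call_payoff_eq_indicator (hK : 0 < K) (hS₀ : 0 < S₀) (z : ℂ) :
    (fun y : ℝ => Complex.exp (z * y) * (max (S₀ * Real.exp y - K) 0 : ℝ))
      = (Ioi (Real.log K - Real.log S₀)).indicator
          (fun y : ℝ => S₀ * Complex.exp ((z + 1) * y) - K * Complex.exp (z * y)) := by
  ext y
  rw [call_payoff_eq_indicator hK hS₀]
  by_cases hy : y ∈ Ioi (Real.log K - Real.log S₀)
  · simp only [indicator_of_mem hy, Complex.ofReal_sub, Complex.ofReal_mul, Complex.ofReal_exp,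
      add_mul, one_mul, Complex.exp_add]
    ring
  · simp [indicator_of_notMem hy]

variable {z : ℂ}

lemma integrable_cexp_mul_call_payoff (hK : 0 < K) (hS₀ : 0 < S₀) (hz : z.re < -1) :
    Integrable (fun y : ℝ => Complex.exp (z * y) * (max (S₀ * Real.exp y - K) 0 : ℝ)) := by
  rw [cexp_mul_call_payoff_eq_indicator hK hS₀, integrable_indicator_iff measurableSet_Ioi]
  have hz₁ : (z + 1).re < 0 := by rw [Complex.add_re, Complex.one_re]; linarith
  exact ((integrableOn_exp_mul_complex_Ioi hz₁ _).const_mul _).sub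
    ((integrableOn_exp_mul_complex_Ioi (by linarith) _).const_mul _)

lemma integral_cexp_mul_call_payoff (hK : 0 < K) (hS₀ : 0 < S₀) (hz : z.re < -1) :
    ∫ y : ℝ, Complex.exp (z * y) * (max (S₀ * Real.exp y - K) 0 : ℝ)
      = K * Complex.exp (z * (Real.log K - Real.log S₀)) * (1 / z - 1 / (z + 1)) := by
  have hz₁ : (z + 1).re < 0 := by rw [Complex.add_re, Complex.one_re]; linarith
  have hz₀ : z.re < 0 := by linarith
  rw [cexp_mul_call_payoff_eq_indicator hK hS₀, integral_indicator measurableSet_Ioi,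
    integral_sub ((integrableOn_exp_mul_complex_Ioi hz₁ _).const_mul _)
      ((integrableOn_exp_mul_complex_Ioi hz₀ _).const_mul _),
    integral_const_mul, integral_const_mul, integral_exp_mul_complex_Ioi hz₁,
    integral_exp_mul_complex_Ioi hz₀]
  have hS₀_exp_log_moneyness : (S₀ : ℂ) * Complex.exp (Real.log K - Real.log S₀ : ℝ) = K := by
    rw [← Complex.ofReal_exp, ← Complex.ofReal_mul, Real.exp_sub, Real.exp_log hK,
      Real.exp_log hS₀, mul_div_cancel₀ _ hS₀.ne']
  have hz₀' : z ≠ 0 := fun h => by simp [h] at hz₀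
  have hz₁' : z + 1 ≠ 0 := fun h => by simp [h] at hz₁
  rw [add_mul, one_mul, Complex.exp_add, ← hS₀_exp_log_moneyness, Complex.ofReal_sub]
  field_simp
  ring

end CallPayoff

/-- The damped call payoff `y ↦ e^{−Ry} max(S₀e^y − K, 0)` is integrable and its
Fourier transform is `K e^{(ix−R)(k−x₀)} (1/(ix−R) − 1/(ix−R+1))`,
where `k = log K` and `x₀ = log S₀`. -/
theorem damped_call_payoff_fourier (R K S₀ : ℝ) (hR : 1 < R) (hK : 0 < K) (hS₀ : 0 < S₀)
    (k x₀ : ℝ) (hk : k = Real.log K) (hx₀ : x₀ = Real.log S₀) :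
    Integrable (fun y : ℝ => Real.exp (-R * y) * max (S₀ * Real.exp y - K) 0) ∧
    ∀ x : ℝ,
      ∫ y : ℝ, Complex.exp (Complex.I * (x : ℂ) * (y : ℂ))
          * ((Real.exp (-R * y) * max (S₀ * Real.exp y - K) 0 : ℝ) : ℂ)
        = (K : ℂ) * Complex.exp ((Complex.I * (x : ℂ) - (R : ℂ)) * ((k : ℂ) - (x₀ : ℂ)))
            * (1 / (Complex.I * (x : ℂ) - (R : ℂ))
              - 1 / (Complex.I * (x : ℂ) - (R : ℂ) + 1)) := by
  subst hk hx₀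
  refine ⟨?_, fun x => ?_⟩
  · have hre := (integrable_cexp_mul_call_payoff hK hS₀ (z := (-R : ℝ)) (by simpa)).re
    convert hre using 2 with y
    rw [← Complex.ofReal_mul, ← Complex.ofReal_exp, ← Complex.ofReal_mul, RCLike.re_to_complex,
      Complex.ofReal_re]
  · have hz : (Complex.I * x - R).re < -1 := by simpa
    rw [← integral_cexp_mul_call_payoff hK hS₀ hz]
    congr 1
    ext y
    rw [sub_eq_add_neg (Complex.I * x), add_mul, Complex.exp_add]
    push_cast
    ring
end

section
/- Let ν be a probability measure on ℝ, R > 1, K > 0 and S₀ > 0, and suppose ∫_ℝ e^{Ry} dν(y) < ∞. Define H(y) = max(S₀ e^y − K, 0), H_R(y) = e^{−Ry} H(y) and Ĥ_R(x) = ∫_ℝ e^{ixy} H_R(y) dy, and assume that Ĥ_R is integrable on ℝ. Then ∫_ℝ H(y) dν(y) = (1/(2π)) ∫_ℝ ( ∫_ℝ e^{(R − ix) y} dν(y) ) Ĥ_R(x) dx. -/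
/-!
Writing `H(y) = e^{Ry} H_R(y)`, the damped payoff `H_R` is continuous and integrable because
`R > 1` and it vanishes for `S₀ e^y ≤ K`, so Fourier inversion gives
`H_R(y) = (1/2π) ∫ e^{-ixy} Ĥ_R(x) dx`. Multiplying by `e^{Ry}` and integrating against `ν`, the
double integral is absolutely convergent since `|e^{(R-ix)y} Ĥ_R(x)| = e^{Ry} |Ĥ_R(x)|`, and
Fubini's theorem exchanges the two integrals.
-/

open MeasureTheory Real FourierTransform Complex

lemma exp_neg_mul_max_sub_le_indicator {R K S : ℝ} (hK : 0 < K) (hS : 0 < S) (y : ℝ) :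
    ‖Real.exp (-R * y) * max (S * Real.exp y - K) 0‖ ≤
      Set.indicator (Set.Ioi (Real.log (K / S))) (fun y => S * Real.exp (-(R - 1) * y)) y := by
  rw [Real.norm_of_nonneg (by positivity)]
  by_cases hy : y ∈ Set.Ioi (Real.log (K / S))
  · rw [Set.indicator_of_mem hy]
    calc Real.exp (-R * y) * max (S * Real.exp y - K) 0
        ≤ Real.exp (-R * y) * (S * Real.exp y) := by
          gcongr
          exact max_le (by linarith) (by positivity)
      _ = S * Real.exp (-(R - 1) * y) := by
        rw [show -(R - 1) * y = y + -R * y by ring, Real.exp_add]; ring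
  · rw [Set.indicator_of_notMem hy]
    have hSy : S * Real.exp y ≤ K := by
      rw [Set.mem_Ioi, not_lt, Real.le_log_iff_exp_le (by positivity), le_div_iff₀ hS] at hy
      linarith
    simp [max_eq_right (sub_nonpos.2 hSy)]

lemma integrable_exp_neg_mul_max_sub {R K S : ℝ} (hR : 1 < R) (hK : 0 < K) (hS : 0 < S) :
    Integrable (fun y => Real.exp (-R * y) * max (S * Real.exp y - K) 0) := by
  have hdom : Integrable (Set.indicator (Set.Ioi (Real.log (K / S)))
      (fun y => S * Real.exp (-(R - 1) * y))) :=
    IntegrableOn.integrable_indicator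
      ((exp_neg_integrableOn_Ioi _ (by linarith)).const_mul S) measurableSet_Ioi
  exact hdom.mono' (by fun_prop) (.of_forall (exp_neg_mul_max_sub_le_indicator hK hS))

/-- The Fourier transform in the convention `ĝ(x) = ∫ e^{ixy} g(y) dy`; Mathlib's `𝓕` uses the
kernel `e^{-2πixy}`. -/
noncomputable def angularFourier (g : ℝ → ℂ) (x : ℝ) : ℂ := ∫ y : ℝ, cexp (I * x * y) * g y

lemma fourier_eq_angularFourier (g : ℝ → ℂ) (w : ℝ) :
    𝓕 g w = angularFourier g (-(2 * π) * w) := by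
  rw [fourier_real_eq_integral_exp_smul, angularFourier]
  congr 1 with y
  rw [smul_eq_mul]
  push_cast
  ring_nf

lemma MeasureTheory.Integrable.fourier_of_angularFourier {g : ℝ → ℂ}
    (hF : Integrable (angularFourier g)) : Integrable (𝓕 g) := by
  simp_rw [funext (fourier_eq_angularFourier g)]
  exact hF.comp_mul_left' (by simp [pi_ne_zero])

lemma angularFourier_inversion {g : ℝ → ℂ} (hc : Continuous g) (hg : Integrable g)
    (hF : Integrable (angularFourier g)) (y : ℝ) :
    g y = ((1 / (2 * π) : ℝ) : ℂ) * ∫ x : ℝ, cexp (-(I * x * y)) * angularFourier g x := by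
  calc g y = 𝓕⁻ (𝓕 g) y := by rw [hc.fourierInv_fourier_eq hg hF.fourier_of_angularFourier]
    _ = ∫ v : ℝ, (fun x : ℝ => cexp (-(I * x * y)) * angularFourier g x) (-(2 * π) * v) := by
      rw [fourierInv_eq']
      congr 1 with v
      rw [fourier_eq_angularFourier, smul_eq_mul, Real.inner_apply]
      congr 2
      push_cast
      ring
    _ = _ := by
      rw [Measure.integral_comp_mul_left (fun x : ℝ => cexp (-(I * x * y)) * angularFourier g x),
        abs_inv, abs_neg, abs_of_pos (by positivity), Complex.real_smul, one_div]

lemma integrable_prod_exp_mul {ν : Measure ℝ} [SFinite ν] {R : ℝ}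
    (hexp : Integrable (fun y => Real.exp (R * y)) ν) {F : ℝ → ℂ} (hF : Integrable F) :
    Integrable (Function.uncurry fun y x : ℝ => cexp ((R - I * x) * y) * F x) (ν.prod volume) := by
  refine (hexp.mul_prod hF.norm).mono' ?_ (.of_forall fun ⟨y, x⟩ => ?_)
  · exact (Continuous.aestronglyMeasurable (by fun_prop)).mul hF.aestronglyMeasurable.comp_snd
  · simp [Complex.norm_exp, Complex.mul_re]

theorem integral_exp_mul_eq_integral_mul_angularFourier {ν : Measure ℝ} [SFinite ν] {R : ℝ}
    (hexp : Integrable (fun y => Real.exp (R * y)) ν) {g : ℝ → ℂ} (hc : Continuous g)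
    (hg : Integrable g) (hF : Integrable (angularFourier g)) :
    ∫ y, cexp (R * y) * g y ∂ν = ((1 / (2 * π) : ℝ) : ℂ) *
      ∫ x : ℝ, (∫ y, cexp ((R - I * x) * y) ∂ν) * angularFourier g x := by
  calc ∫ y, cexp (R * y) * g y ∂ν
      = ∫ y, ((1 / (2 * π) : ℝ) : ℂ) *
          ∫ x : ℝ, cexp ((R - I * x) * y) * angularFourier g x ∂volume ∂ν := by
        congr 1 with y
        rw [angularFourier_inversion hc hg hF y, mul_left_comm, ← integral_const_mul]
        congr 2 with x
        rw [← mul_assoc, ← Complex.exp_add]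
        ring_nf
    _ = ((1 / (2 * π) : ℝ) : ℂ) *
          ∫ x : ℝ, ∫ y, cexp ((R - I * x) * y) * angularFourier g x ∂ν := by
        rw [integral_const_mul, integral_integral_swap (integrable_prod_exp_mul hexp hF)]
    _ = _ := by simp_rw [integral_mul_const]

/-- Fourier pricing representation for the call payoff: if `ν` is a probability
measure on `ℝ` with `∫ e^{Ry} dν < ∞` and the Fourier transform `Ĥ_R` of the
damped payoff is integrable, then
`∫ H dν = (1/2π) ∫ (∫ e^{(R−ix)y} dν(y)) Ĥ_R(x) dx`. -/
theorem call_price_fourier_representation (ν : Measure ℝ) [IsProbabilityMeasure ν]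
    (R K S₀ : ℝ) (hR : 1 < R) (hK : 0 < K) (hS₀ : 0 < S₀)
    (hexp : Integrable (fun y : ℝ => Real.exp (R * y)) ν)
    (H HR : ℝ → ℝ) (FHR : ℝ → ℂ)
    (hH : ∀ y, H y = max (S₀ * Real.exp y - K) 0)
    (hHR : ∀ y, HR y = Real.exp (-R * y) * H y)
    (hFHR : ∀ x : ℝ, FHR x = ∫ y : ℝ, Complex.exp (Complex.I * (x : ℂ) * (y : ℂ)) * ((HR y : ℝ) : ℂ))
    (hFint : Integrable FHR) :
    ((∫ y, H y ∂ν : ℝ) : ℂ)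
      = ((1 / (2 * Real.pi) : ℝ) : ℂ)
        * ∫ x : ℝ, (∫ y, Complex.exp (((R : ℂ) - Complex.I * (x : ℂ)) * (y : ℂ)) ∂ν) * FHR x := by
  have hH_eq (y : ℝ) : ((H y : ℝ) : ℂ) = cexp (R * y) * (HR y : ℂ) := by
    push_cast [hHR]
    rw [← mul_assoc, ← Complex.exp_add]
    simp
  have hHR_cont : Continuous HR := by
    rw [funext hHR, funext hH]
    fun_prop
  have hHR_int : Integrable HR := by
    rw [funext hHR, funext hH]
    exact integrable_exp_neg_mul_max_sub hR hK hS₀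
  obtain rfl : FHR = angularFourier fun y => (HR y : ℂ) := funext hFHR
  rw [← integral_complex_ofReal, integral_congr_ae (.of_forall hH_eq)]
  exact integral_exp_mul_eq_integral_mul_angularFourier hexp (by fun_prop) hHR_int.ofReal hFint
end
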